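/- arXiv:2402.13672 — 2 statements merged into one kernel-verified Lean document; each statement's English description precedes it below -/
import Mathlib

section
/- If q ≥ 2 is an integer, d ≥ 2, and (q^d - 1)/(q - 1) = 2^k for some integer k ≥ 1, then d = 2 and q = 2^k - 1; in particular q is one less than a power of 2. -/
/-!
Since `k ≥ 1` the sum `1 + q + ⋯ + q^(d-1)` is even, which forces `q` odd and `d` even. Writing
`d = 2m`, the sum factors as `(1 + q) * (1 + q^2 + ⋯ + q^(2(m-1)))`, so the second factor is a
power of two. If `m ≥ 2` it exceeds `1`, hence is even, so `m` is even as well and `1 + q^2`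
divides `2^k`. But `q^2 + 1 ≡ 2 (mod 4)` for odd `q`, so `q^2 + 1 = 2`, contradicting `q ≥ 2`.
Hence `m = 1`, i.e. `d = 2` and `1 + q = 2^k`.
-/

open Finset

lemma geom_sum_range_mul {R : Type*} [CommSemiring R] (x : R) (a b : ℕ) :
    ∑ i ∈ range (a * b), x ^ i =
      (∑ i ∈ range a, x ^ i) * ∑ j ∈ range b, (x ^ a) ^ j := by
  induction b with
  | zero => simp
  | succ b ih =>
    rw [Nat.mul_succ, sum_range_add, ih, sum_range_succ, mul_add, ← pow_mul]
    congr 1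
    simp only [sum_mul, pow_add, mul_comm]

lemma Nat.even_geom_sum_iff {q d : ℕ} (hd : d ≠ 0) :
    Even (∑ i ∈ range d, q ^ i) ↔ Odd q ∧ Even d := by
  rw [← ZMod.natCast_eq_zero_iff_even]
  push_cast
  rcases Nat.even_or_odd q with hq | hq
  · rw [ZMod.natCast_eq_zero_iff_even.2 hq, zero_geom_sum, if_neg hd]
    simp [Nat.not_odd_iff_even.2 hq]
  · rw [ZMod.natCast_eq_one_iff_odd.2 hq, one_geom_sum, ZMod.natCast_eq_zero_iff_even]
    simp [hq]

lemma Nat.le_one_of_sq_add_one_dvd_two_pow {q k : ℕ} (h : q ^ 2 + 1 ∣ 2 ^ k) : q ≤ 1 := by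
  obtain ⟨s, -, hs⟩ := (Nat.dvd_prime_pow Nat.prime_two).1 h
  match s, hs with
  | 0, hs => nlinarith
  | 1, hs => nlinarith
  | s + 2, hs =>
    have h4 : (q : ZMod 4) ^ 2 + 1 = 0 := by
      have := congrArg (Nat.cast : ℕ → ZMod 4) hs
      push_cast at this
      rw [this, pow_add]
      exact mul_eq_zero_of_right _ (by decide)
    exact absurd h4 (by generalize (q : ZMod 4) = x; revert x; decide)

lemma Nat.even_of_dvd_two_pow {n k : ℕ} (h : n ∣ 2 ^ k) (hn : 1 < n) : Even n := by
  obtain ⟨t, -, rfl⟩ := (Nat.dvd_prime_pow Nat.prime_two).1 h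
  exact Nat.even_pow.2 ⟨even_two, by rintro rfl; simp at hn⟩

theorem stmt_9 (q d k : ℕ) (hq : 2 ≤ q) (hd : 2 ≤ d) (hk : 1 ≤ k)
    (h : ∑ i ∈ Finset.range d, q ^ i = 2 ^ k) :
    d = 2 ∧ q = 2 ^ k - 1 := by
  have h_even : Even (∑ i ∈ range d, q ^ i) := h ▸ Nat.even_pow.2 ⟨even_two, by omega⟩
  obtain ⟨-, m, rfl⟩ := (Nat.even_geom_sum_iff (by omega)).1 h_even
  rw [← two_mul, geom_sum_range_mul, geom_sum_two] at h
  obtain rfl | hm : m = 1 ∨ 2 ≤ m := by omega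
  · simp only [range_one, sum_singleton, pow_zero, mul_one] at h
    omega
  · have hT_gt : 1 < ∑ j ∈ range m, (q ^ 2) ^ j :=
      calc 1 < ∑ j ∈ range 2, (q ^ 2) ^ j := by
            rw [geom_sum_two]; exact lt_add_of_pos_left 1 (by positivity)
        _ ≤ _ := sum_le_sum_of_subset (range_subset_range.2 hm)
    obtain ⟨-, n, rfl⟩ := (Nat.even_geom_sum_iff (by omega)).1
      (Nat.even_of_dvd_two_pow (Dvd.intro_left _ h) hT_gt)
    rw [← two_mul, geom_sum_range_mul, geom_sum_two] at h
    have := Nat.le_one_of_sq_add_one_dvd_two_pow (h ▸ dvd_mul_of_dvd_right (dvd_mul_right _ _) _)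
    omega
end

section
/- If d > 2 and (q^d - 1)/(q - 1) = p^k for integers q ≥ 2, k ≥ 1 and prime p, then p does not divide gcd(d, q - 1). -/
/-!
Suppose `p` divides both `d` and `q - 1`. For odd `p`, lifting the exponent gives
`v_p(1 + q + ⋯ + q^(d-1)) = v_p(d)`; since the sum is a power of `p`, it is then at most `d`,
yet it exceeds `d`. For `p = 2` write `d = 2m`, so the sum is `(q + 1)(1 + q² + ⋯ + q^(2(m-1)))`.
Lifting the exponent at `2` shows that the second factor, again a power of `2`, has the same
`2`-adic valuation as `m`, so it is at most `m`; but it exceeds `m` because `m ≥ 2`.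
-/

open Finset

lemma lt_geom_sum {x n : ℕ} (hx : 1 < x) (hn : 2 ≤ n) : n < ∑ i ∈ range n, x ^ i := by
  calc n = ∑ _i ∈ range n, 1 := by simp
    _ < ∑ i ∈ range n, x ^ i :=
      sum_lt_sum (fun i _ ↦ Nat.one_le_pow _ _ (by omega))
        ⟨1, mem_range.mpr hn, by simpa using hx⟩

lemma geom_sum_two_mul {R : Type*} [CommSemiring R] (x : R) (m : ℕ) :
    ∑ i ∈ range (2 * m), x ^ i = (x + 1) * ∑ j ∈ range m, (x ^ 2) ^ j := by
  induction m with
  | zero => simp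
  | succ m ih =>
    rw [Nat.mul_succ, sum_range_succ, sum_range_succ, ih, sum_range_succ, ← pow_mul]
    ring

lemma padicValNat_geom_sum {p x n : ℕ} [hp : Fact p.Prime] (hp_odd : Odd p) (hx : 1 < x)
    (hpx : p ∣ x - 1) (hn : n ≠ 0) :
    padicValNat p (∑ i ∈ range n, x ^ i) = padicValNat p n := by
  have hpx' : ¬p ∣ x := fun h ↦ hp.out.not_dvd_one <| by
    simpa [Nat.sub_sub_self hx.le] using Nat.dvd_sub h hpx
  have := padicValNat.pow_sub_pow hp_odd hx (by simpa using hpx) hpx' hn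
  rw [one_pow, ← geom_sum_mul_of_one_le hx.le,
    padicValNat.mul (geom_sum_pos (Nat.zero_le x) hn).ne' (by omega)] at this
  omega

lemma padicValNat_two_geom_sum {x n : ℕ} (hx : 1 < x) (hx2 : ¬2 ∣ x) (hn : n ≠ 0)
    (hn2 : Even n) :
    padicValNat 2 (∑ i ∈ range n, x ^ i) + 1 = padicValNat 2 (x + 1) + padicValNat 2 n := by
  have := padicValNat.pow_two_sub_one hx hx2 hn hn2
  rw [← geom_sum_mul_of_one_le hx.le,
    padicValNat.mul (geom_sum_pos (Nat.zero_le x) hn).ne' (by omega)] at this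
  omega

lemma le_of_padicValNat_eq {p s n k : ℕ} [Fact p.Prime] (hs : s = p ^ k)
    (hv : padicValNat p s = padicValNat p n) (hn : n ≠ 0) : s ≤ n := by
  subst hs
  rw [padicValNat.prime_pow] at hv
  exact Nat.le_of_dvd (Nat.pos_of_ne_zero hn) (hv ▸ pow_padicValNat_dvd)

lemma geom_sum_ne_pow_of_odd {p x n k : ℕ} (hp : p.Prime) (hp_odd : Odd p) (hx : 1 < x)
    (hpx : p ∣ x - 1) (hpn : p ∣ n) (hn : n ≠ 0) : ∑ i ∈ range n, x ^ i ≠ p ^ k := by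
  intro h
  have := Fact.mk hp
  have hle := le_of_padicValNat_eq h (padicValNat_geom_sum hp_odd hx hpx hn) hn
  have hlt := lt_geom_sum hx (hp.two_le.trans (Nat.le_of_dvd (Nat.pos_of_ne_zero hn) hpn))
  omega

lemma geom_sum_ne_two_pow {x n k : ℕ} (hx : 1 < x) (hx2 : ¬2 ∣ x) (hn2 : Even n) (hn : 2 < n) :
    ∑ i ∈ range n, x ^ i ≠ 2 ^ k := by
  intro h
  obtain ⟨m, rfl⟩ : ∃ m, n = 2 * m := hn2.exists_two_nsmul _
  have hv := padicValNat_two_geom_sum hx hx2 (by omega) hn2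
  rw [geom_sum_two_mul] at h hv
  obtain ⟨j, -, hT⟩ := (Nat.dvd_prime_pow Nat.prime_two).1 (Dvd.intro_left _ h)
  rw [padicValNat.mul (by omega) (geom_sum_pos (Nat.zero_le _) (by omega)).ne',
    padicValNat.mul two_ne_zero (by omega), padicValNat.self one_lt_two] at hv
  have hle := le_of_padicValNat_eq hT (by omega) (by omega : m ≠ 0)
  have hlt := lt_geom_sum (one_lt_pow₀ hx two_ne_zero) (by omega : 2 ≤ m)
  omega

theorem stmt_15_general (q d p k : ℕ) (hq : 2 ≤ q) (hd : 2 < d) (hp : p.Prime)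
    (h : ∑ i ∈ Finset.range d, q ^ i = p ^ k) :
    ¬ p ∣ Nat.gcd d (q - 1) := by
  rw [Nat.dvd_gcd_iff]
  rintro ⟨hpd, hpq⟩
  rcases hp.eq_two_or_odd' with rfl | hp_odd
  · exact geom_sum_ne_two_pow hq (by omega) (even_iff_two_dvd.2 hpd) hd h
  · exact geom_sum_ne_pow_of_odd hp hp_odd hq hpq hpd (by omega) h

theorem stmt_15 (q d p k : ℕ) (hq : 2 ≤ q) (hd : 2 < d) (hp : p.Prime)
    (hk : 1 ≤ k) (h : ∑ i ∈ Finset.range d, q ^ i = p ^ k) :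
    ¬ p ∣ Nat.gcd d (q - 1) :=
  stmt_15_general q d p k hq hd hp h
end
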